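/- arXiv:2011.14895 — 2 statements merged into one kernel-verified Lean document; each statement's English description precedes it below -/
import Mathlib

section
/- For every x ∈ ℝ^{n_0} and every activation pattern s ∈ S, one has s ∈ S^C(x) if and only if Ã_s(x)_{lj}(s_{lj} − 0.5) ≥ 0 for all (l,j) ∈ I. -/
/-!
Formalization of the setting of "Deep ReLU Programming" (Hinz & van de Geer).

A feed-forward ReLU network with `L` hidden layers and widths `n 0, …, n (L+1)`
(`n (L+1) = 1` for a real-valued network) is encoded by the structure `Net L n`
below, where `W k : Matrix (Fin (n (k+1))) (Fin (n k)) ℝ` and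
`b k : Fin (n (k+1)) → ℝ` are the weight matrix and bias vector of layer `k+1`
(so the paper's `W_l, b_l` correspond to `W (l-1), b (l-1)` here).

A neuron `(l, j)` of the paper (layer `l ∈ {1, …, L}`, neuron `j`) is encoded as
the pair `⟨k, j⟩ : Idx n` with `k = l - 1`; membership in the index set `I`
corresponds to the condition `k < L`.
-/

noncomputable section
open Metric Filter Topology
open scoped Classical RealInnerProductSpace BigOperators

namespace DRLP

/-- Input space `ℝ^{n 0}` with the Euclidean metric and inner product. -/
abbrev Input (n : ℕ → ℕ) := EuclideanSpace ℝ (Fin (n 0))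

/-- Patterns: one real number for each neuron `⟨k, j⟩` (neuron `j` of layer `k+1`). -/
abbrev Pat (n : ℕ → ℕ) := ∀ k : ℕ, Fin (n (k+1)) → ℝ

/-- Neuron indices: `⟨k, j⟩` denotes neuron `j` of layer `k+1`. -/
abbrev Idx (n : ℕ → ℕ) := Σ k : ℕ, Fin (n (k+1))

/-- `s` is an activation pattern (element of `S = {0,1}^{n_1} × ⋯ × {0,1}^{n_L}`). -/
def IsPattern (L : ℕ) {n : ℕ → ℕ} (s : Pat n) : Prop :=
  ∀ k < L, ∀ j, s k j = 0 ∨ s k j = 1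

/-- Compatibility of a (hyperplane) pattern `h` with an activation pattern `s`:
`h_{lj} (s_{lj} - 0.5) ≥ 0` for all neurons `(l,j) ∈ I`. -/
def PatCompatible (L : ℕ) {n : ℕ → ℕ} (h s : Pat n) : Prop :=
  ∀ k < L, ∀ j, h k j * (s k j - 1/2) ≥ 0

/-- A feed-forward ReLU network with `L` hidden layers and widths `n 0, …, n (L+1)`. -/
structure Net (L : ℕ) (n : ℕ → ℕ) : Type where
  W : ∀ k : ℕ, Matrix (Fin (n (k+1))) (Fin (n k)) ℝ
  b : ∀ k : ℕ, Fin (n (k+1)) → ℝ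

namespace Net

variable {L : ℕ} {n : ℕ → ℕ} (N : Net L n)

/-- Output of layer `k` (entrywise ReLU applied); layer `0` is the input itself. -/
def hid (x : Input n) : (k : ℕ) → Fin (n k) → ℝ
  | 0 => fun i => x i
  | k + 1 => fun j => max ((N.W k).mulVec (hid x k) j + N.b k j) 0

/-- The ReLU arguments `A(x)`: pre-activation of neuron `j` in layer `k+1`. -/
def preact (x : Input n) (k : ℕ) (j : Fin (n (k+1))) : ℝ :=
  (N.W k).mulVec (N.hid x k) j + N.b k j

/-- The hyperplane pattern `H(x) = sign.(A(x))`. -/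
def Hpat (x : Input n) (k : ℕ) (j : Fin (n (k+1))) : ℝ :=
  Real.sign (N.preact x k j)

/-- Subjective hidden layers: activations frozen to the pattern `s`. -/
def shid (s : Pat n) (x : Input n) : (k : ℕ) → Fin (n k) → ℝ
  | 0 => fun i => x i
  | k + 1 => fun j => s k j * ((N.W k).mulVec (shid s x k) j + N.b k j)

/-- The subjective ReLU arguments `Ã_s(x)`. -/
def spreact (s : Pat n) (x : Input n) (k : ℕ) (j : Fin (n (k+1))) : ℝ :=
  (N.W k).mulVec (N.shid s x k) j + N.b k j

/-- The subjective hyperplane pattern `H̃_s(x) = sign.(Ã_s(x))`. -/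
def sHpat (s : Pat n) (x : Input n) (k : ℕ) (j : Fin (n (k+1))) : ℝ :=
  Real.sign (N.spreact s x k j)

/-- `S^C(x)`: activation patterns compatible with the hyperplane pattern `H(x)`. -/
def SC (x : Input n) : Set (Pat n) :=
  {s | IsPattern L s ∧ PatCompatible L (N.Hpat x) s}

/-- `S̃^C(x)`: activation patterns compatible with their own induced subjective
hyperplane pattern `H̃_s(x)`. -/
def SCtilde (x : Input n) : Set (Pat n) :=
  {s | IsPattern L s ∧ PatCompatible L (N.sHpat s x) s}

/-- `C(x)`: critical indices, i.e. neurons whose hyperplane pattern is non-constant in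
every neighbourhood of `x`. -/
def Critical (x : Input n) (p : Idx n) : Prop :=
  p.1 < L ∧ ∀ ε > 0, ∃ y z : Input n, dist y x < ε ∧ dist z x < ε ∧
    N.Hpat y p.1 p.2 ≠ N.Hpat z p.1 p.2

/-- `C̃_s(x)`: subjective critical indices. -/
def sCritical (s : Pat n) (x : Input n) (p : Idx n) : Prop :=
  p.1 < L ∧ ∀ ε > 0, ∃ y z : Input n, dist y x < ε ∧ dist z x < ε ∧
    N.sHpat s y p.1 p.2 ≠ N.sHpat s z p.1 p.2

/-- The critical kernel `Ker^C(x)`. -/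
def KerC (x : Input n) : Set (Input n) :=
  {v | ∃ ε > 0, ∀ t : ℝ, |t| < ε → ∀ p : Idx n, p.1 < L →
    N.Hpat (x + t • v) p.1 p.2 = N.Hpat x p.1 p.2}

/-- The subjective critical kernel `K̃er^C_s(x)`. -/
def sKerC (s : Pat n) (x : Input n) : Set (Input n) :=
  {v | ∃ ε > 0, ∀ t : ℝ, |t| < ε → ∀ p : Idx n, p.1 < L →
    N.sHpat s (x + t • v) p.1 p.2 = N.sHpat s x p.1 p.2}

/-- Critical degrees of freedom `df^C(x) = dim Ker^C(x)`. -/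
def dfC (x : Input n) : ℕ :=
  Module.finrank ℝ (Submodule.span ℝ (N.KerC x))

/-- `x` is a vertex iff `df^C(x) = 0`. -/
def IsVertex (x : Input n) : Prop := N.dfC x = 0

/-- The matrix `W_{k+1} diag(s_k) W_k ⋯ diag(s_1) W_1`. -/
def sMat (s : Pat n) : (k : ℕ) → Matrix (Fin (n (k+1))) (Fin (n 0)) ℝ
  | 0 => N.W 0
  | k + 1 => N.W (k+1) * Matrix.diagonal (s k) * sMat s k

/-- The normal vector `ṽ_{s,l,j}` (transpose of the `j`-th row of
`W_l diag(s_{l-1}) ⋯ diag(s_1) W_1`). -/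
def nvec (s : Pat n) (p : Idx n) : Input n :=
  WithLp.toLp 2 (fun i => N.sMat s p.1 p.2 i)

/-- The oriented normal vector `ũ_{s,l,j}`. -/
def onvec (s : Pat n) (p : Idx n) : Input n :=
  if s p.1 p.2 = 1 then N.nvec s p else -N.nvec s p

/-- The gradient `∇_s = (W_{L+1} diag(s_L) ⋯ diag(s_1) W_1)ᵀ ∈ ℝ^{n_0}`. -/
def grad (h1 : n (L+1) = 1) (s : Pat n) : Input n :=
  N.nvec s ⟨L, Fin.cast h1.symm 0⟩

/-- The (real-valued) network function `f`. -/
def fnet (h1 : n (L+1) = 1) (x : Input n) : ℝ :=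
  N.preact x L (Fin.cast h1.symm 0)

/-- The subjective network function `f̃_s`. -/
def sfnet (h1 : n (L+1) = 1) (s : Pat n) (x : Input n) : ℝ :=
  N.spreact s x L (Fin.cast h1.symm 0)

/-- The feasible directions `D̃_s(x)`. -/
def Dfeas (s : Pat n) (x : Input n) : Set (Input n) :=
  {v | ∃ ε > 0, s ∈ N.SC (x + ε • v)}

/-- `x` is a regular point: for every compatible activation pattern `s ∈ S^C(x)`, the
normal vectors at the subjective critical indices are linearly independent. -/
def RegularPoint (x : Input n) : Prop :=
  ∀ s ∈ N.SC x, LinearIndependent ℝ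
    (fun p : {p : Idx n // N.sCritical s x p} => N.nvec s p.1)

/-- The network is regular if every point is a regular point. -/
def Regular : Prop := ∀ x : Input n, N.RegularPoint x

/-- `w` is the feasible axis `ã_{x,s,l,j}` at `x` for the activation pattern `s` and the
critical index `p = (l,j)`: it pairs to `1` with the oriented normal vector of `p` and
to `0` with the oriented normal vectors of all other critical indices of `x`. -/
def IsAxis (x : Input n) (s : Pat n) (p : Idx n) (w : Input n) : Prop :=
  ∀ q : Idx n, N.Critical x q → ⟪w, N.onvec s q⟫ = if p = q then 1 else 0

/-- The region separating axes `𝒜(x)`. -/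
def RegionSepAxes (x : Input n) : Set (Input n) :=
  {w | ∃ s ∈ N.SC x, ∃ p : Idx n, N.Critical x p ∧ N.IsAxis x s p w}

end Net

lemma sign_mul_nonneg_iff (t c : ℝ) : 0 ≤ Real.sign t * c ↔ 0 ≤ t * c := by
  rcases lt_trichotomy t 0 with ht | rfl | ht
  · rw [Real.sign_of_neg ht, ← neg_mul_neg t c, mul_nonneg_iff_of_pos_left (neg_pos.2 ht),
      neg_one_mul]
  · simp
  · rw [Real.sign_of_pos ht, one_mul, mul_nonneg_iff_of_pos_left ht]

lemma patCompatible_sign_iff {L : ℕ} {n : ℕ → ℕ} (h s : Pat n) :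
    PatCompatible L (fun k j => Real.sign (h k j)) s ↔ PatCompatible L h s :=
  forall₂_congr fun _ _ => forall_congr' fun _ => sign_mul_nonneg_iff _ _

lemma IsPattern.mono {L L' : ℕ} {n : ℕ → ℕ} {s : Pat n} (hs : IsPattern L s) (h : L' ≤ L) :
    IsPattern L' s :=
  fun k hk => hs k (hk.trans_le h)

lemma patCompatible_succ_iff {k : ℕ} {n : ℕ → ℕ} {h s : Pat n} :
    PatCompatible (k + 1) h s ↔ PatCompatible k h s ∧ ∀ j, h k j * (s k j - 1/2) ≥ 0 := by
  refine ⟨fun hc => ⟨fun k' hk' => hc k' (hk'.trans k.lt_succ_self), hc k k.lt_succ_self⟩, ?_⟩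
  rintro ⟨hc, hk⟩ k' hk'
  rcases Nat.lt_succ_iff_lt_or_eq.1 hk' with hk' | rfl
  exacts [hc k' hk', hk]

lemma mul_eq_max_zero {σ a : ℝ} (hσ : σ = 0 ∨ σ = 1) (h : a * (σ - 1/2) ≥ 0) :
    σ * a = max a 0 := by
  rcases hσ with rfl | rfl
  · rw [zero_mul, max_eq_right (by linarith)]
  · rw [one_mul, max_eq_left (by linarith)]

namespace Net

variable {L : ℕ} {n : ℕ → ℕ} (N : Net L n) {s : Pat n} {x : Input n}

lemma patCompatible_Hpat_iff {k : ℕ} :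
    PatCompatible k (N.Hpat x) s ↔ PatCompatible k (N.preact x) s :=
  patCompatible_sign_iff _ _

lemma spreact_eq_preact_of_shid_eq {k : ℕ} (h : N.shid s x k = N.hid x k) :
    N.spreact s x k = N.preact x k := by
  funext j
  rw [spreact, preact, h]

lemma shid_eq_hid_of_patCompatible {k : ℕ} (hs : IsPattern k s)
    (h : PatCompatible k (N.preact x) s) : N.shid s x k = N.hid x k := by
  induction k with
  | zero => rfl
  | succ k ih =>
    obtain ⟨hc, hk⟩ := patCompatible_succ_iff.1 h
    funext j
    rw [shid, hid, ih (IsPattern.mono hs k.le_succ) hc]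
    exact mul_eq_max_zero (hs k k.lt_succ_self j) (hk j)

/-- As long as `s` matches the signs of the true ReLU arguments on the first `k` layers, the
subjective and true networks agree there, so compatibility can be checked on either. -/
lemma patCompatible_preact_iff_spreact {k : ℕ} (hs : IsPattern k s) :
    PatCompatible k (N.preact x) s ↔ PatCompatible k (N.spreact s x) s := by
  induction k with
  | zero => simp [PatCompatible]
  | succ k ih =>
    have hs' := IsPattern.mono hs k.le_succ
    rw [patCompatible_succ_iff, patCompatible_succ_iff, ← ih hs']
    exact and_congr_right fun hc => by
      rw [N.spreact_eq_preact_of_shid_eq (N.shid_eq_hid_of_patCompatible hs' hc)]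

end Net

/-- Lemma 13: for every `x` and every activation pattern `s ∈ S`, one has
`s ∈ S^C(x)` iff `Ã_s(x)_{lj}(s_{lj} - 0.5) ≥ 0` for all `(l,j) ∈ I`. -/
theorem statement18 {L : ℕ} {n : ℕ → ℕ} (N : Net L n) (x : Input n) (s : Pat n)
    (hS : IsPattern L s) :
    s ∈ N.SC x ↔
      ∀ p : Idx n, p.1 < L → N.spreact s x p.1 p.2 * (s p.1 p.2 - 1/2) ≥ 0 := by
  rw [Net.SC, Set.mem_ofPred_eq, and_iff_right hS, N.patCompatible_Hpat_iff,
    N.patCompatible_preact_iff_spreact hS]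
  exact ⟨fun h p hp => h p.1 hp p.2, fun h k hk j => h ⟨k, j⟩ hk⟩

end DRLP
end
end

section
/- For every x ∈ ℝ^{n_0} and every non-zero v ∈ ℝ^{n_0}, the one-sided directional derivative lim_{t↘0} (f(x+tv) − f(x))/t exists. Moreover, if ε* > 0 is such that H(y)_{lj} is constant for y ∈ B_{ε*}(x) and all (l,j) ∈ I \ C(x), if t* > 0 is small enough that x + t*v ∈ B_{ε*}(x), and if s ∈ S^C(x + t*v), then lim_{t↘0} (f(x+tv) − f(x))/t = lim_{t↘0} (f̃_s(x+tv) − f̃_s(x))/t = ⟨v, ∇_s⟩. -/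
/-!
Formalization of the setting of "Deep ReLU Programming" (Hinz & van de Geer).

A feed-forward ReLU network with `L` hidden layers and widths `n 0, …, n (L+1)`
(`n (L+1) = 1` for a real-valued network) is encoded by the structure `Net L n`
below, where `W k : Matrix (Fin (n (k+1))) (Fin (n k)) ℝ` and
`b k : Fin (n (k+1)) → ℝ` are the weight matrix and bias vector of layer `k+1`
(so the paper's `W_l, b_l` correspond to `W (l-1), b (l-1)` here).

A neuron `(l, j)` of the paper (layer `l ∈ {1, …, L}`, neuron `j`) is encoded as
the pair `⟨k, j⟩ : Idx n` with `k = l - 1`; membership in the index set `I`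
corresponds to the condition `k < L`.
-/

noncomputable section
open Metric Filter Topology
open scoped Classical RealInnerProductSpace BigOperators

namespace DRLP

/-!
Along the ray `t ↦ x + t • v`, `0 < t`, inside `B_{ε*}(x)` no neuron changes the sign of its
argument: non-critical neurons by the choice of `ε*`, critical ones because their argument
vanishes at `x` and hence, by induction over the layers, equals `t` times a constant there. So
the activation pattern `s` is compatible with `x` and with every point of the ray, on which `f`
therefore agrees with the subjective network `f̃_s`; the latter is affine with slope
`⟪v, ∇_s⟫` in direction `v`.
-/

theorem sign_mul_of_pos {t c : ℝ} (ht : 0 < t) : Real.sign (t * c) = Real.sign c := by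
  rcases lt_trichotomy c 0 with hc | rfl | hc
  · rw [Real.sign_of_neg hc, Real.sign_of_neg (mul_neg_of_pos_of_neg ht hc)]
  · rw [mul_zero]
  · rw [Real.sign_of_pos hc, Real.sign_of_pos (mul_pos ht hc)]

theorem eventually_sign_eq {X : Type*} [TopologicalSpace X] {f : X → ℝ} {x : X}
    (hf : ContinuousAt f x) (hx : f x ≠ 0) :
    ∀ᶠ y in 𝓝 x, Real.sign (f y) = Real.sign (f x) := by
  rcases hx.lt_or_gt with hx | hx
  · filter_upwards [hf.eventually (gt_mem_nhds hx)] with y hy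
    rw [Real.sign_of_neg hy, Real.sign_of_neg hx]
  · filter_upwards [hf.eventually (lt_mem_nhds hx)] with y hy
    rw [Real.sign_of_pos hy, Real.sign_of_pos hx]

theorem tendsto_slope_of_eventually_eq {F : ℝ → ℝ} {a g : ℝ}
    (h : ∀ᶠ t in 𝓝[>] 0, F t = a + t * g) :
    Tendsto (fun t => (F t - a) / t) (𝓝[>] 0) (𝓝 g) :=
  tendsto_const_nhds.congr' <| by
    filter_upwards [h, self_mem_nhdsWithin] with t ht ht0
    rw [ht, add_sub_cancel_left, mul_div_cancel_left₀ _ (ne_of_gt ht0)]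

theorem eventually_dist_ray_lt {E : Type*} [SeminormedAddCommGroup E] [NormedSpace ℝ E]
    (x v : E) {ε : ℝ} (hε : 0 < ε) : ∀ᶠ t in 𝓝[>] (0 : ℝ), dist (x + t • v) x < ε := by
  have hray : Tendsto (fun t : ℝ => x + t • v) (𝓝 0) (𝓝 x) := by
    simpa using ((continuous_id.smul continuous_const).const_add x).tendsto (0 : ℝ)
  exact nhdsWithin_le_nhds (Metric.tendsto_nhds.mp hray ε hε)

theorem max_zero_eq_mul_of_compatible {a σ : ℝ} (hσ : σ = 0 ∨ σ = 1)
    (h : Real.sign a * (σ - 1/2) ≥ 0) : max a 0 = σ * a := by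
  rcases hσ with rfl | rfl
  · rw [zero_mul, max_eq_right_iff]
    by_contra! ha
    rw [Real.sign_of_pos ha] at h
    norm_num at h
  · rw [one_mul, max_eq_left_iff]
    by_contra! ha
    rw [Real.sign_of_neg ha] at h
    norm_num at h

theorem IsPattern.mono_s19 {n : ℕ → ℕ} {k m : ℕ} {s : Pat n} (h : IsPattern m s) (hkm : k ≤ m) :
    IsPattern k s :=
  fun i hi => h i (hi.trans_le hkm)

theorem PatCompatible.mono_s19 {n : ℕ → ℕ} {k m : ℕ} {h s : Pat n} (hc : PatCompatible m h s)
    (hkm : k ≤ m) : PatCompatible k h s :=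
  fun i hi => hc i (hi.trans_le hkm)

open scoped Matrix

namespace Net

variable {L : ℕ} {n : ℕ → ℕ} (N : Net L n)

theorem hid_eq_shid {s : Pat n} {y : Input n} :
    ∀ {k : ℕ}, IsPattern k s → PatCompatible k (N.Hpat y) s → N.hid y k = N.shid s y k
  | 0, _, _ => rfl
  | k + 1, hs, hc => by
    have ih := hid_eq_shid (hs.mono_s19 k.le_succ) (hc.mono_s19 k.le_succ)
    funext j
    show max (N.preact y k j) 0 = s k j * N.spreact s y k j
    rw [spreact, ← ih]
    exact max_zero_eq_mul_of_compatible (hs k k.lt_succ_self j) (hc k k.lt_succ_self j)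

theorem preact_eq_spreact {s : Pat n} {y : Input n} {k : ℕ} (hs : IsPattern k s)
    (hc : PatCompatible k (N.Hpat y) s) (j : Fin (n (k+1))) :
    N.preact y k j = N.spreact s y k j := by
  rw [preact, spreact, N.hid_eq_shid hs hc]

theorem fnet_eq_sfnet (h1 : n (L+1) = 1) {s : Pat n} {y : Input n} (hs : s ∈ N.SC y) :
    N.fnet h1 y = N.sfnet h1 s y :=
  N.preact_eq_spreact hs.1 hs.2 _

theorem exists_mem_SC (y : Input n) : ∃ s, s ∈ N.SC y := by
  refine ⟨fun k j => if 0 < N.preact y k j then 1 else 0, fun k _ j => ?_, fun k _ j => ?_⟩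
  · beta_reduce
    split_ifs <;> simp
  · beta_reduce
    rw [Hpat]
    rcases lt_trichotomy (N.preact y k j) 0 with h | h | h
    · rw [Real.sign_of_neg h, if_neg h.not_gt]; norm_num
    · rw [h, Real.sign_zero, zero_mul]
    · rw [Real.sign_of_pos h, if_pos h]; norm_num

theorem spreact_succ (s : Pat n) (y : Input n) (k : ℕ) :
    N.spreact s y (k+1) =
      N.W (k+1) *ᵥ (Matrix.diagonal (s k) *ᵥ N.spreact s y k) + N.b (k+1) := by
  funext j
  simp only [spreact, Pi.add_apply]
  congr 2
  funext i
  rw [Matrix.mulVec_diagonal]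
  rfl

theorem spreact_add_smul (s : Pat n) (x v : Input n) (t : ℝ) :
    ∀ k, N.spreact s (x + t • v) k = N.spreact s x k + t • (N.sMat s k *ᵥ v)
  | 0 => by
    show N.W 0 *ᵥ (x.ofLp + t • v.ofLp) + N.b 0 =
      N.W 0 *ᵥ x.ofLp + N.b 0 + t • (N.W 0 *ᵥ v.ofLp)
    rw [Matrix.mulVec_add, Matrix.mulVec_smul]
    abel
  | k + 1 => by
    rw [spreact_succ, spreact_succ, spreact_add_smul s x v t k, sMat, Matrix.mulVec_add,
      Matrix.mulVec_smul, Matrix.mulVec_add, Matrix.mulVec_smul, ← Matrix.mulVec_mulVec,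
      ← Matrix.mulVec_mulVec]
    abel

theorem inner_grad (h1 : n (L+1) = 1) (s : Pat n) (v : Input n) :
    ⟪v, N.grad h1 s⟫ = (N.sMat s L *ᵥ v) (Fin.cast h1.symm 0) := by
  simp only [PiLp.inner_apply, RCLike.inner_apply, conj_trivial, grad, nvec,
    Matrix.mulVec, dotProduct]

theorem sfnet_add_smul (h1 : n (L+1) = 1) (s : Pat n) (x v : Input n) (t : ℝ) :
    N.sfnet h1 s (x + t • v) = N.sfnet h1 s x + t * ⟪v, N.grad h1 s⟫ := by
  rw [inner_grad, sfnet, sfnet, spreact_add_smul]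
  rfl

theorem continuous_hid : ∀ k, Continuous fun y : Input n => N.hid y k
  | 0 => by fun_prop
  | k + 1 => continuous_pi fun j =>
    (((continuous_apply j).comp (continuous_const.matrix_mulVec (continuous_hid k))).add
      continuous_const).max continuous_const

theorem continuous_preact (k : ℕ) (j : Fin (n (k+1))) :
    Continuous fun y : Input n => N.preact y k j :=
  ((continuous_apply j).comp (continuous_const.matrix_mulVec (N.continuous_hid k))).add
    continuous_const

theorem not_critical_of_eventually_eq {x : Input n} {p : Idx n}
    (h : ∀ᶠ y in 𝓝 x, N.Hpat y p.1 p.2 = N.Hpat x p.1 p.2) : ¬ N.Critical x p := by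
  rintro ⟨-, hc⟩
  obtain ⟨ε, hε, hball⟩ := Metric.eventually_nhds_iff.mp h
  obtain ⟨y, z, hy, hz, hne⟩ := hc ε hε
  exact hne ((hball hy).trans (hball hz).symm)

theorem preact_eq_zero_of_critical {x : Input n} {p : Idx n} (hc : N.Critical x p) :
    N.preact x p.1 p.2 = 0 := by
  by_contra h
  exact N.not_critical_of_eventually_eq
    (eventually_sign_eq (N.continuous_preact p.1 p.2).continuousAt h) hc

theorem eventually_Hpat_eq_of_not_critical {x : Input n} {p : Idx n} (hp : p.1 < L)
    (hc : ¬ N.Critical x p) : ∀ᶠ y in 𝓝 x, N.Hpat y p.1 p.2 = N.Hpat x p.1 p.2 := by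
  obtain ⟨ε, hε, hconst⟩ : ∃ ε > 0, ∀ y z : Input n, dist y x < ε → dist z x < ε →
      N.Hpat y p.1 p.2 = N.Hpat z p.1 p.2 := by
    by_contra! h
    exact hc ⟨hp, h⟩
  exact Metric.eventually_nhds_iff.mpr ⟨ε, hε, fun y hy => hconst y x hy (by rwa [dist_self])⟩

/-- `ε` is admissible as the radius `ε*` of the statement. -/
def StableRadius (x : Input n) (ε : ℝ) : Prop :=
  ∀ p : Idx n, p.1 < L → ¬ N.Critical x p →
    ∀ y : Input n, dist y x < ε → N.Hpat y p.1 p.2 = N.Hpat x p.1 p.2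

theorem exists_stableRadius (x : Input n) : ∃ ε > 0, N.StableRadius x ε := by
  have : ∀ᶠ y in 𝓝 x, ∀ k ∈ Finset.range L, ∀ j : Fin (n (k+1)),
      ¬ N.Critical x ⟨k, j⟩ → N.Hpat y k j = N.Hpat x k j := by
    rw [Filter.eventually_all_finset]
    intro k hk
    rw [Filter.eventually_all]
    intro j
    by_cases hc : N.Critical x ⟨k, j⟩
    · exact Eventually.of_forall fun _ h => absurd hc h
    · filter_upwards [N.eventually_Hpat_eq_of_not_critical (p := ⟨k, j⟩)
        (Finset.mem_range.mp hk) hc] with y hy _ using hy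
  obtain ⟨ε, hε, hball⟩ := Metric.eventually_nhds_iff.mp this
  exact ⟨ε, hε, fun p hp hc y hy => hball hy p.1 (Finset.mem_range.mpr hp) p.2 hc⟩

theorem SC_subset_SC_of_stableRadius {x y : Input n} {ε : ℝ} (hε : N.StableRadius x ε)
    (hy : dist y x < ε) : N.SC y ⊆ N.SC x := by
  rintro s ⟨hs, hc⟩
  refine ⟨hs, fun k hk j => ?_⟩
  by_cases hcrit : N.Critical x ⟨k, j⟩
  · rw [Hpat, N.preact_eq_zero_of_critical hcrit, Real.sign_zero, zero_mul]
  · rw [← hε ⟨k, j⟩ hk hcrit y hy]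
    exact hc k hk j

theorem preact_add_smul_of_preact_eq_zero {s : Pat n} {k : ℕ} {x v : Input n} {t : ℝ}
    (hs : IsPattern k s) (hx : PatCompatible k (N.Hpat x) s)
    (ht : PatCompatible k (N.Hpat (x + t • v)) s) {j : Fin (n (k+1))}
    (h0 : N.preact x k j = 0) :
    N.preact (x + t • v) k j = t * (N.sMat s k *ᵥ v) j := by
  rw [N.preact_eq_spreact hs ht, N.spreact_add_smul, Pi.add_apply, ← N.preact_eq_spreact hs hx,
    h0, zero_add]
  rfl

theorem mem_SC_ray {x v : Input n} {ε t₀ t : ℝ} {s : Pat n} (hε : N.StableRadius x ε)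
    (ht₀ : 0 < t₀) (hd₀ : dist (x + t₀ • v) x < ε) (hs : s ∈ N.SC (x + t₀ • v))
    (ht : 0 < t) (hd : dist (x + t • v) x < ε) : s ∈ N.SC (x + t • v) := by
  have hsx := N.SC_subset_SC_of_stableRadius hε hd₀ hs
  suffices ∀ k ≤ L, PatCompatible k (N.Hpat (x + t • v)) s from ⟨hs.1, this L le_rfl⟩
  intro k
  induction k with
  | zero => exact fun _ i hi => absurd hi (Nat.not_lt_zero i)
  | succ k ih =>
    intro hk i hi j
    have hkL : k < L := hk
    rcases Nat.lt_succ_iff_lt_or_eq.mp hi with hi | rfl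
    · exact ih hkL.le i hi j
    by_cases hcrit : N.Critical x ⟨i, j⟩
    · have h0 := N.preact_eq_zero_of_critical hcrit
      have hpat := hs.1.mono_s19 hkL.le
      have hcx := hsx.2.mono_s19 hkL.le
      rw [Hpat, N.preact_add_smul_of_preact_eq_zero hpat hcx (ih hkL.le) h0, sign_mul_of_pos ht,
        ← sign_mul_of_pos ht₀, ← N.preact_add_smul_of_preact_eq_zero hpat hcx (hs.2.mono_s19 hkL.le) h0]
      exact hs.2 i hkL j
    · rw [hε ⟨i, j⟩ hkL hcrit _ hd, ← hε ⟨i, j⟩ hkL hcrit _ hd₀]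
      exact hs.2 i hkL j

theorem tendsto_slope_of_stableRadius (h1 : n (L+1) = 1) {x v : Input n} {ε t₀ : ℝ} {s : Pat n}
    (hε : N.StableRadius x ε) (ht₀ : 0 < t₀) (hd₀ : dist (x + t₀ • v) x < ε)
    (hs : s ∈ N.SC (x + t₀ • v)) :
    Tendsto (fun t : ℝ => (N.fnet h1 (x + t • v) - N.fnet h1 x) / t)
        (𝓝[>] (0 : ℝ)) (𝓝 ⟪v, N.grad h1 s⟫) ∧
      Tendsto (fun t : ℝ => (N.sfnet h1 s (x + t • v) - N.sfnet h1 s x) / t)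
        (𝓝[>] (0 : ℝ)) (𝓝 ⟪v, N.grad h1 s⟫) := by
  refine ⟨?_, tendsto_slope_of_eventually_eq (.of_forall (N.sfnet_add_smul h1 s x v))⟩
  rw [N.fnet_eq_sfnet h1 (N.SC_subset_SC_of_stableRadius hε hd₀ hs)]
  refine tendsto_slope_of_eventually_eq ?_
  filter_upwards [eventually_dist_ray_lt x v (dist_nonneg.trans_lt hd₀), self_mem_nhdsWithin]
    with t hd ht
  rw [N.fnet_eq_sfnet h1 (N.mem_SC_ray hε ht₀ hd₀ hs ht hd), sfnet_add_smul]

end Net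

theorem statement19_general {L : ℕ} {n : ℕ → ℕ} (N : Net L n) (h1 : n (L+1) = 1)
    (x v : Input n) :
    (∃ c : ℝ, Tendsto (fun t : ℝ => (N.fnet h1 (x + t • v) - N.fnet h1 x) / t)
        (𝓝[>] (0 : ℝ)) (𝓝 c)) ∧
      ∀ ε : ℝ, 0 < ε →
        (∀ p : Idx n, p.1 < L → ¬ N.Critical x p →
          ∀ y : Input n, dist y x < ε → N.Hpat y p.1 p.2 = N.Hpat x p.1 p.2) →
        ∀ t₀ : ℝ, 0 < t₀ → dist (x + t₀ • v) x < ε →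
          ∀ s ∈ N.SC (x + t₀ • v),
            Tendsto (fun t : ℝ => (N.fnet h1 (x + t • v) - N.fnet h1 x) / t)
              (𝓝[>] (0 : ℝ)) (𝓝 ⟪v, N.grad h1 s⟫) ∧
            Tendsto (fun t : ℝ => (N.sfnet h1 s (x + t • v) - N.sfnet h1 s x) / t)
              (𝓝[>] (0 : ℝ)) (𝓝 ⟪v, N.grad h1 s⟫) := by
  refine ⟨?_, fun ε _ hε t₀ ht₀ hd₀ s hs => N.tendsto_slope_of_stableRadius h1 hε ht₀ hd₀ hs⟩
  obtain ⟨ε, hε₀, hε⟩ := N.exists_stableRadius x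
  obtain ⟨t₀, hd₀, ht₀⟩ := ((eventually_dist_ray_lt x v hε₀).and self_mem_nhdsWithin).exists
  obtain ⟨s, hs⟩ := N.exists_mem_SC (x + t₀ • v)
  exact ⟨_, (N.tendsto_slope_of_stableRadius h1 hε ht₀ hd₀ hs).1⟩

/-- Lemma 14: for every `x` and non-zero `v`, the one-sided directional
derivative `lim_{t↘0} (f(x+tv) - f(x))/t` exists; moreover, if `ε* > 0` is such that
`H(y)_{lj}` is constant on `B_{ε*}(x)` for all `(l,j) ∈ I \ C(x)`, if `t* > 0` is small
enough that `x + t*v ∈ B_{ε*}(x)` and if `s ∈ S^C(x + t*v)`, then both the objective and the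
subjective difference quotients converge to `⟨v, ∇_s⟩`. -/
theorem statement19 {L : ℕ} {n : ℕ → ℕ} (N : Net L n) (h1 : n (L+1) = 1)
    (x v : Input n) (hv : v ≠ 0) :
    (∃ c : ℝ, Tendsto (fun t : ℝ => (N.fnet h1 (x + t • v) - N.fnet h1 x) / t)
        (𝓝[>] (0 : ℝ)) (𝓝 c)) ∧
      ∀ ε : ℝ, 0 < ε →
        (∀ p : Idx n, p.1 < L → ¬ N.Critical x p →
          ∀ y : Input n, dist y x < ε → N.Hpat y p.1 p.2 = N.Hpat x p.1 p.2) →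
        ∀ t₀ : ℝ, 0 < t₀ → dist (x + t₀ • v) x < ε →
          ∀ s ∈ N.SC (x + t₀ • v),
            Tendsto (fun t : ℝ => (N.fnet h1 (x + t • v) - N.fnet h1 x) / t)
              (𝓝[>] (0 : ℝ)) (𝓝 ⟪v, N.grad h1 s⟫) ∧
            Tendsto (fun t : ℝ => (N.sfnet h1 s (x + t • v) - N.sfnet h1 s x) / t)
              (𝓝[>] (0 : ℝ)) (𝓝 ⟪v, N.grad h1 s⟫) :=
  statement19_general N h1 x v

end DRLP
end
end
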